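/- arXiv:0906.0858 — 2 statements merged into one kernel-verified Lean document; each statement's English description precedes it below -/
import Mathlib

section
/- Correctness of the Metropolis algorithm: Let S be a finite nonempty state space, let P = (P_ij : i,j ∈ S) be a symmetric stochastic matrix, and let π = (π_i : i ∈ S) be a distribution on S with π_i > 0 for all i. Define the Metropolis transition matrix T by T_ij = P_ij·min{1, π_i/π_j} + δ_ij ∑_{k∈S} P_kj (1 − min{1, π_k/π_j}). Then T is a stochastic matrix and π is a stationary distribution of T. -/
/-- **Correctness of the Metropolis algorithm.**
Let `P` be a symmetric stochastic proposal matrix on a finite nonempty state space `S`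
and let `π` be a distribution on `S` with strictly positive entries. Then the Metropolis
transition matrix
`T i j = P i j * min {1, π i / π j} + δ_ij * ∑ k, P k j * (1 - min {1, π k / π j})`
is a stochastic matrix, and `π` is a stationary distribution of `T`. -/
theorem stmt_6 {S : Type*} [Fintype S] [Nonempty S] [DecidableEq S]
    (P : S → S → ℝ) (π : S → ℝ)
    (hPsymm : ∀ i j, P i j = P j i)
    (hPnonneg : ∀ i j, 0 ≤ P i j)
    (hPstoch : ∀ j, ∑ i, P i j = 1)
    (hπpos : ∀ i, 0 < π i)
    (hπsum : ∑ i, π i = 1)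
    (T : S → S → ℝ)
    (hT : ∀ i j, T i j = P i j * min 1 (π i / π j)
        + (if i = j then 1 else 0) * ∑ k, P k j * (1 - min 1 (π k / π j))) :
    (∀ i j, 0 ≤ T i j) ∧ (∀ j, ∑ i, T i j = 1) ∧ (∀ i, ∑ j, T i j * π j = π i) := by
  have hm0 : ∀ i j, 0 ≤ min 1 (π i / π j) := fun i j =>
    le_min one_pos.le (div_nonneg (hπpos i).le (hπpos j).le)
  have hm1 : ∀ i j, min 1 (π i / π j) ≤ 1 := fun i j => min_le_left _ _
  have hnn : ∀ i j, 0 ≤ T i j := by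
    intro i j
    rw [hT]
    apply add_nonneg (mul_nonneg (hPnonneg i j) (hm0 i j))
    apply mul_nonneg
    · split <;> norm_num
    · exact Finset.sum_nonneg fun k _ =>
        mul_nonneg (hPnonneg k j) (by linarith [hm1 k j])
  have hcol : ∀ j, ∑ i, T i j = 1 := by
    intro j
    have key : ∀ i, T i j = P i j * min 1 (π i / π j)
        + (if i = j then ∑ k, P k j * (1 - min 1 (π k / π j)) else 0) := by
      intro i; rw [hT]; split <;> ring
    rw [Finset.sum_congr rfl fun i _ => key i, Finset.sum_add_distrib,
      Finset.sum_ite_eq' Finset.univ j _, if_pos (Finset.mem_univ j),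
      ← Finset.sum_add_distrib]
    have : ∀ k, P k j * min 1 (π k / π j) + P k j * (1 - min 1 (π k / π j))
        = P k j := fun k => by ring
    rw [Finset.sum_congr rfl fun k _ => this k, hPstoch]
  refine ⟨hnn, hcol, ?_⟩
  have hdb : ∀ i j, T i j * π j = T j i * π i := by
    intro i j
    rcases eq_or_ne i j with rfl | hij
    · rfl
    · rw [hT i j, hT j i, if_neg hij, if_neg (Ne.symm hij), zero_mul, zero_mul,
        add_zero, add_zero, mul_assoc, mul_assoc]
      have h1 : min 1 (π i / π j) * π j = min (π j) (π i) := by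
        rw [min_mul_of_nonneg _ _ (hπpos j).le, one_mul,
          div_mul_cancel₀ _ (hπpos j).ne']
      have h2 : min 1 (π j / π i) * π i = min (π i) (π j) := by
        rw [min_mul_of_nonneg _ _ (hπpos i).le, one_mul,
          div_mul_cancel₀ _ (hπpos i).ne']
      rw [h1, h2, min_comm, hPsymm]
  intro i
  calc ∑ j, T i j * π j = ∑ j, T j i * π i := by simp only [hdb]
    _ = (∑ j, T j i) * π i := by rw [Finset.sum_mul]
    _ = π i := by rw [hcol, one_mul]
end

section
/- Existence and uniqueness of the stationary distribution (first part of the Ergodic Theorem): Let T be an aperiodic and irreducible stochastic matrix on a finite nonempty state space S. Then there exists a unique distribution π = (π_i : i ∈ S) such that ∑_{j∈S} T_ij π_j = π_i for all i ∈ S. -/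
open Matrix Finset

private lemma aux_pow_nonneg {S : Type*} [Fintype S] [DecidableEq S]
    (T : Matrix S S ℝ) (h : ∀ i j, 0 ≤ T i j) (n : ℕ) : ∀ i j, 0 ≤ (T ^ n) i j := by
  induction n with
  | zero =>
      intro i j
      simp only [pow_zero, Matrix.one_apply]
      split <;> norm_num
  | succ n ih =>
      intro i j
      rw [pow_succ, Matrix.mul_apply]
      exact Finset.sum_nonneg fun k _ => mul_nonneg (ih i k) (h k j)

private lemma aux_pow_fixed {S : Type*} [Fintype S] [DecidableEq S]
    (T : Matrix S S ℝ) (w : S → ℝ) (hw : T.mulVec w = w) (n : ℕ) :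
    (T ^ n).mulVec w = w := by
  induction n with
  | zero => simp
  | succ n ih => rw [pow_succ, ← Matrix.mulVec_mulVec, hw, ih]

private lemma aux_pos {S : Type*} [Fintype S] [DecidableEq S]
    (T : Matrix S S ℝ) (hnn : ∀ i j, 0 ≤ T i j)
    (hirr : ∀ i j : S, ∃ n : ℕ, 0 < (T ^ n) i j)
    (w : S → ℝ) (hw0 : ∀ i, 0 ≤ w i) (hfix : T.mulVec w = w)
    (j : S) (hj : 0 < w j) : ∀ i, 0 < w i := by
  intro i
  obtain ⟨n, hn⟩ := hirr i j
  have hfixn := congrFun (aux_pow_fixed T w hfix n) i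
  simp only [Matrix.mulVec, dotProduct] at hfixn
  rw [← hfixn]
  have h1 : (T ^ n) i j * w j ≤ ∑ k, (T ^ n) i k * w k :=
    Finset.single_le_sum (f := fun k => (T ^ n) i k * w k)
      (fun k _ => mul_nonneg (aux_pow_nonneg T hnn n i k) (hw0 k)) (Finset.mem_univ j)
  exact lt_of_lt_of_le (mul_pos hn hj) h1

private lemma aux_abs_fixed {S : Type*} [Fintype S]
    (T : Matrix S S ℝ) (hnn : ∀ i j, 0 ≤ T i j)
    (hstoch : ∀ j, ∑ i, T i j = 1) (v : S → ℝ) (hv : T.mulVec v = v) :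
    T.mulVec (fun i => |v i|) = fun i => |v i| := by
  have hle : ∀ i, |v i| ≤ ∑ j, T i j * |v j| := by
    intro i
    have h := congrFun hv i
    simp only [Matrix.mulVec, dotProduct] at h
    calc |v i| = |∑ j, T i j * v j| := by rw [h]
      _ ≤ ∑ j, |T i j * v j| := Finset.abs_sum_le_sum_abs _ _
      _ = ∑ j, T i j * |v j| := by
          refine Finset.sum_congr rfl fun j _ => ?_
          rw [abs_mul, abs_of_nonneg (hnn i j)]
  have hsum : ∑ i, ∑ j, T i j * |v j| = ∑ i, |v i| := by
    rw [Finset.sum_comm]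
    calc ∑ j, ∑ i, T i j * |v j| = ∑ j, (∑ i, T i j) * |v j| := by
          simp [Finset.sum_mul]
      _ = ∑ j, |v j| := by simp [hstoch]
  have heq : ∀ i ∈ Finset.univ, ∑ j, T i j * |v j| = |v i| := by
    by_contra h
    push_neg at h
    obtain ⟨i, _, hi⟩ := h
    have : ∑ k, |v k| < ∑ k, ∑ j, T k j * |v j| :=
      Finset.sum_lt_sum (fun k _ => hle k)
        ⟨i, Finset.mem_univ i, lt_of_le_of_ne (hle i) (Ne.symm hi)⟩
    linarith [hsum]
  funext i
  simp only [Matrix.mulVec, dotProduct]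
  exact heq i (Finset.mem_univ i)

private lemma aux_r1 (x : ℝ) : 0 ≤ (|x| + x) / 2 := by
  have := neg_abs_le x; linarith

private lemma aux_r2 (x : ℝ) : 0 ≤ (|x| - x) / 2 := by
  have := le_abs_self x; linarith

private lemma aux_r3 (x : ℝ) (h : 0 < x) : 0 < (|x| + x) / 2 := by
  have := abs_nonneg x; linarith

private lemma aux_r4 (x : ℝ) (h : x < 0) : 0 < (|x| - x) / 2 := by
  have := abs_nonneg x; linarith

private lemma aux_r5 (x : ℝ) (h1 : 0 < (|x| + x) / 2) (h2 : 0 < (|x| - x) / 2) : False := by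
  rcases abs_cases x with ⟨h, _⟩ | ⟨h, _⟩ <;> rw [h] at h1 h2 <;> linarith

private lemma aux_unique {S : Type*} [Fintype S] [Nonempty S] [DecidableEq S]
    (T : Matrix S S ℝ)
    (hTnonneg : ∀ i j, 0 ≤ T i j)
    (hTstoch : ∀ j, ∑ i, T i j = 1)
    (hirreducible : ∀ i j : S, ∃ n : ℕ, 0 < (T ^ n) i j)
    (π ρ : S → ℝ)
    (hπ : (∀ i, 0 ≤ π i) ∧ (∑ i, π i = 1) ∧ (∀ i, ∑ j, T i j * π j = π i))
    (hρ : (∀ i, 0 ≤ ρ i) ∧ (∑ i, ρ i = 1) ∧ (∀ i, ∑ j, T i j * ρ j = ρ i)) :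
    π = ρ := by
  by_contra hne
  set u : S → ℝ := fun i => π i - ρ i with hu
  have hufix : T.mulVec u = u := by
    funext i
    simp only [Matrix.mulVec, dotProduct, hu, mul_sub, Finset.sum_sub_distrib]
    rw [hπ.2.2 i, hρ.2.2 i]
  have husum : ∑ i, u i = 0 := by
    simp [hu, Finset.sum_sub_distrib, hπ.2.1, hρ.2.1]
  have hune : ∃ k, u k ≠ 0 := by
    by_contra h
    push_neg at h
    exact hne (funext fun i => by have := h i; simp [hu] at this; linarith)
  have habs : T.mulVec (fun i => |u i|) = fun i => |u i| :=
    aux_abs_fixed T hTnonneg hTstoch u hufix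
  -- there exists a positive and a negative entry
  have hpos : ∃ j, 0 < u j := by
    by_contra h
    push_neg at h
    obtain ⟨k, hk⟩ := hune
    have hk' : u k < 0 := lt_of_le_of_ne (h k) hk
    have : ∑ i, u i < ∑ i, (0 : ℝ) :=
      Finset.sum_lt_sum (fun i _ => h i) ⟨k, Finset.mem_univ k, hk'⟩
    simp [husum] at this
  have hneg : ∃ j, u j < 0 := by
    by_contra h
    push_neg at h
    obtain ⟨k, hk⟩ := hune
    have hk' : 0 < u k := lt_of_le_of_ne (h k) (Ne.symm hk)
    have : ∑ i, (0 : ℝ) < ∑ i, u i :=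
      Finset.sum_lt_sum (fun i _ => h i) ⟨k, Finset.mem_univ k, hk'⟩
    simp [husum] at this
  set wp : S → ℝ := fun i => (|u i| + u i) / 2 with hwp
  set wm : S → ℝ := fun i => (|u i| - u i) / 2 with hwm
  have hwpfix : T.mulVec wp = wp := by
    funext i
    have h1 := congrFun habs i
    have h2 := congrFun hufix i
    simp only [Matrix.mulVec, dotProduct] at h1 h2 ⊢
    show ∑ x, T i x * ((|u x| + u x) / 2) = (|u i| + u i) / 2
    have : ∑ x, T i x * ((|u x| + u x) / 2)
        = ((∑ x, T i x * |u x|) + ∑ x, T i x * u x) / 2 := by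
      rw [← Finset.sum_add_distrib, Finset.sum_div]
      exact Finset.sum_congr rfl fun x _ => by ring
    rw [this, h1, h2]
  have hwmfix : T.mulVec wm = wm := by
    funext i
    have h1 := congrFun habs i
    have h2 := congrFun hufix i
    simp only [Matrix.mulVec, dotProduct] at h1 h2 ⊢
    show ∑ x, T i x * ((|u x| - u x) / 2) = (|u i| - u i) / 2
    have : ∑ x, T i x * ((|u x| - u x) / 2)
        = ((∑ x, T i x * |u x|) - ∑ x, T i x * u x) / 2 := by
      rw [← Finset.sum_sub_distrib, Finset.sum_div]
      exact Finset.sum_congr rfl fun x _ => by ring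
    rw [this, h1, h2]
  have hwp0 : ∀ i, 0 ≤ wp i := fun i => aux_r1 (u i)
  have hwm0 : ∀ i, 0 ≤ wm i := fun i => aux_r2 (u i)
  obtain ⟨j, hj⟩ := hpos
  obtain ⟨k, hk⟩ := hneg
  have hwpj : 0 < wp j := aux_r3 (u j) hj
  have hwmk : 0 < wm k := aux_r4 (u k) hk
  have hwpall := aux_pos T hTnonneg hirreducible wp hwp0 hwpfix j hwpj
  have hwmall := aux_pos T hTnonneg hirreducible wm hwm0 hwmfix k hwmk
  obtain ⟨i⟩ := ‹Nonempty S›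
  exact aux_r5 (u i) (hwpall i) (hwmall i)

/-- **Existence and uniqueness of the stationary distribution** (first part of the
Ergodic Theorem): an aperiodic and irreducible stochastic matrix `T` on a finite
nonempty state space `S` has a unique stationary distribution, i.e. there is exactly
one distribution `π` with `∑ j, T i j * π j = π i` for all `i`. -/
theorem stmt_12 {S : Type*} [Fintype S] [Nonempty S] [DecidableEq S]
    (T : Matrix S S ℝ)
    (hTnonneg : ∀ i j, 0 ≤ T i j)
    (hTstoch : ∀ j, ∑ i, T i j = 1)
    (haperiodic : ∀ i : S, ∃ nᵢ : ℕ, ∀ n ≥ nᵢ, 0 < (T ^ n) i i)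
    (hirreducible : ∀ i j : S, ∃ n : ℕ, 0 < (T ^ n) i j) :
    ∃! π : S → ℝ, (∀ i, 0 ≤ π i) ∧ (∑ i, π i = 1) ∧ (∀ i, ∑ j, T i j * π j = π i) := by
  -- existence of a nonzero fixed vector via det (T - 1) = 0
  have hker : ∃ v : S → ℝ, v ≠ 0 ∧ (T - 1)ᵀ.transpose.mulVec v = 0 := by
    have h1 : (T - 1)ᵀ.mulVec (fun _ => (1:ℝ)) = 0 := by
      funext i
      simp only [Matrix.mulVec, dotProduct, Matrix.transpose_apply, Matrix.sub_apply,
        Matrix.one_apply, mul_one, Pi.zero_apply, Finset.sum_sub_distrib]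
      rw [hTstoch i]
      simp
    have hdetT : (T - 1)ᵀ.det = 0 := by
      rw [← Matrix.exists_mulVec_eq_zero_iff]
      refine ⟨fun _ => (1:ℝ), ?_, h1⟩
      intro h
      obtain ⟨i⟩ := ‹Nonempty S›
      have := congrFun h i
      norm_num at this
    have hdet : (T - 1).det = 0 := by rw [← Matrix.det_transpose]; exact hdetT
    have := Matrix.exists_mulVec_eq_zero_iff.mpr hdet
    obtain ⟨v, hv0, hv⟩ := this
    exact ⟨v, hv0, by simpa using hv⟩
  obtain ⟨v, hv0, hv⟩ := hker
  simp only [Matrix.transpose_transpose] at hv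
  have hvfix : T.mulVec v = v := by
    have := hv
    rw [Matrix.sub_mulVec, Matrix.one_mulVec, sub_eq_zero] at this
    exact this
  have habs : T.mulVec (fun i => |v i|) = fun i => |v i| :=
    aux_abs_fixed T hTnonneg hTstoch v hvfix
  set c : ℝ := ∑ j, |v j| with hc
  have hcpos : 0 < c := by
    have : ∃ i, v i ≠ 0 := by
      by_contra h
      push_neg at h
      exact hv0 (funext fun i => h i)
    obtain ⟨i, hi⟩ := this
    exact Finset.sum_pos' (fun j _ => abs_nonneg _)
      ⟨i, Finset.mem_univ i, abs_pos.mpr hi⟩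
  set π : S → ℝ := fun i => |v i| / c with hπdef
  have hπprop : (∀ i, 0 ≤ π i) ∧ (∑ i, π i = 1) ∧ (∀ i, ∑ j, T i j * π j = π i) := by
    refine ⟨fun i => div_nonneg (abs_nonneg _) hcpos.le, ?_, ?_⟩
    · simp only [hπdef, ← Finset.sum_div]
      rw [← hc, div_self hcpos.ne']
    · intro i
      have h := congrFun habs i
      simp only [Matrix.mulVec, dotProduct] at h
      show ∑ j, T i j * (|v j| / c) = |v i| / c
      have heq : ∑ j, T i j * (|v j| / c) = (∑ j, T i j * |v j|) / c := by
        rw [Finset.sum_div]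
        exact Finset.sum_congr rfl fun x _ => by ring
      rw [heq, h]
  exact ⟨π, hπprop, fun ρ hρ => aux_unique T hTnonneg hTstoch hirreducible ρ π hρ hπprop⟩
end
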